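/- The class of regular languages is strictly contained in PostS: every regular language over Σ belongs to PostS, and the nonregular language L_eq over the alphabet {a,b} belongs to PostS. -/

import Mathlib

noncomputable section

/-- The input alphabet extended with the two endmarkers `¢` and `$`. -/
inductive ESym (α : Type) : Type where
  | cent : ESym α
  | dollar : ESym α
  | letter : α → ESym α

/-- The state distribution obtained by applying, in order, the matrices for
`¢`, the letters of `w`, and `$` to the standard basis vector at the initial state `0`. -/
def pRun {α : Type} {n : ℕ} (A : ESym α → Matrix (Fin (n + 1)) (Fin (n + 1)) ℝ)
    (w : List α) : Fin (n + 1) → ℝ :=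
  (ESym.cent :: (w.map ESym.letter ++ [ESym.dollar])).foldl
    (fun v σ => (A σ).mulVec v) (Pi.single 0 1)

/-- A real-time probabilistic finite automaton with postselection (RT-PostPFA). -/
structure PostPFA (α : Type) where
  n : ℕ
  A : ESym α → Matrix (Fin (n + 1)) (Fin (n + 1)) ℝ
  nonneg : ∀ σ i j, 0 ≤ A σ i j
  colSum : ∀ σ j, ∑ i, A σ i j = 1
  Qpa : Finset (Fin (n + 1))
  Qpr : Finset (Fin (n + 1))
  disj : Disjoint Qpa Qpr
  postPos : ∀ w : List α,
    0 < (∑ i ∈ Qpa, pRun A w i) + (∑ i ∈ Qpr, pRun A w i)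

/-- Acceptance probability before postselection. -/
def PostPFA.pacc {α : Type} (M : PostPFA α) (w : List α) : ℝ :=
  ∑ i ∈ M.Qpa, pRun M.A w i

/-- Rejection probability before postselection. -/
def PostPFA.prej {α : Type} (M : PostPFA α) (w : List α) : ℝ :=
  ∑ i ∈ M.Qpr, pRun M.A w i

/-- Normalized acceptance probability of an RT-PostPFA. -/
def PostPFA.fa {α : Type} (M : PostPFA α) (w : List α) : ℝ :=
  M.pacc w / (M.pacc w + M.prej w)

/-- Recognition of a language with error bound `ε`. -/
def PostPFA.Recognizes {α : Type} (M : PostPFA α) (L : Set (List α)) (ε : ℝ) : Prop :=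
  ∀ w : List α, (w ∈ L → 1 - ε ≤ M.fa w) ∧ (w ∉ L → M.fa w ≤ ε)

/-- The class of languages recognized by RT-PostPFAs with bounded error. -/
def PostS {α : Type} (L : Set (List α)) : Prop :=
  ∃ (M : PostPFA α) (ε : ℝ), 0 ≤ ε ∧ ε < 1 / 2 ∧ M.Recognizes L ε

/-- Recognition with zero error: `fa = 1` on members, `fa = 0` on non-members. -/
def PostPFA.RecognizesZero {α : Type} (M : PostPFA α) (L : Set (List α)) : Prop :=
  ∀ w : List α, (w ∈ L → M.fa w = 1) ∧ (w ∉ L → M.fa w = 0)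

/-- The class of languages recognized by RT-PostPFAs with zero error. -/
def ZPostS {α : Type} (L : Set (List α)) : Prop :=
  ∃ M : PostPFA α, M.RecognizesZero L

/-- The two-letter alphabet `{a, b}`. -/
inductive TwoSym : Type where
  | a : TwoSym
  | b : TwoSym
deriving DecidableEq

instance : Fintype TwoSym :=
  ⟨⟨{TwoSym.a, TwoSym.b}, by simp⟩, fun x => by cases x <;> simp⟩

/-- The language of words with equally many `a`s and `b`s. -/
def Leq : Set (List TwoSym) := {w | w.count TwoSym.a = w.count TwoSym.b}

/-- The language of palindromes over `{a, b}`. -/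
def Lpal : Set (List TwoSym) := {w | w.reverse = w}

/-!
A DFA is run by deterministic (0/1) column-stochastic matrices, postselecting on its accepting
and rejecting states; so every regular language is recognized with zero error.

For `L_eq`, put `p = 4^(-#a(w))` and `q = 4^(-#b(w))`. A six-state PFA ends with weight `3pq/5`
on its accepting and `(p² + q²)/5` on its rejecting state, so `f^a(w) = 3pq / (3pq + p² + q²)`.
This is `3/5` if `p = q`; otherwise `p / q` is a power of `4` other than `1`, so
`4(p² + q²) - 17pq = (q - 4p)(4q - p) ≥ 0` and `f^a(w) ≤ 12/29`. `L_eq` is not regular since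
its left quotients by the words `a^m` are pairwise distinct (Myhill–Nerode).
-/

section Deterministic

variable {ι : Type} [DecidableEq ι]

def funMatrix (f : ι → ι) : Matrix ι ι ℝ :=
  Matrix.of fun i j => (Pi.single (f j) 1 : ι → ℝ) i

lemma funMatrix_nonneg (f : ι → ι) (i j : ι) : 0 ≤ funMatrix f i j :=
  (Pi.single_nonneg.mpr zero_le_one : (0 : ι → ℝ) ≤ Pi.single (f j) 1) i

variable [Fintype ι]

lemma sum_funMatrix_col (f : ι → ι) (j : ι) : ∑ i, funMatrix f i j = 1 :=
  Fintype.sum_pi_single' (f j) 1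

lemma funMatrix_mulVec_single (f : ι → ι) (j : ι) :
    (funMatrix f).mulVec (Pi.single j 1) = Pi.single (f j) 1 :=
  Matrix.mulVec_single_one _ _

lemma foldl_funMatrix_mulVec_single {β : Type*} (f : β → ι → ι) (l : List β) (j : ι) :
    l.foldl (fun v b => (funMatrix (f b)).mulVec v) (Pi.single j 1) =
      Pi.single (l.foldl (fun s b => f b s) j) 1 := by
  induction l generalizing j with
  | nil => rfl
  | cons b l ih => rw [List.foldl_cons, funMatrix_mulVec_single, ih, List.foldl_cons]

end Deterministic

namespace DFA

open Classical

variable {α : Type} {n : ℕ} (M : DFA α (Fin (n + 1)))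

def endmarkedStep : ESym α → Fin (n + 1) → Fin (n + 1)
  | .cent => fun _ => M.start
  | .dollar => id
  | .letter a => fun s => M.step s a

lemma pRun_funMatrix_endmarkedStep (w : List α) :
    pRun (fun σ => funMatrix (M.endmarkedStep σ)) w = Pi.single (M.eval w) 1 := by
  rw [pRun, foldl_funMatrix_mulVec_single]
  simp only [List.foldl_cons, List.foldl_append, List.foldl_map, List.foldl_nil, endmarkedStep,
    id_eq]
  rfl

def toPostPFA : PostPFA α where
  n := n
  A σ := funMatrix (M.endmarkedStep σ)
  nonneg σ := funMatrix_nonneg _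
  colSum σ := sum_funMatrix_col _
  Qpa := Finset.univ.filter (· ∈ M.accept)
  Qpr := Finset.univ.filter (· ∉ M.accept)
  disj := Finset.disjoint_filter_filter_not _ _ _
  postPos w := by
    by_cases h : M.eval w ∈ M.accept <;>
      simp [M.pRun_funMatrix_endmarkedStep, Finset.sum_pi_single', h]

lemma toPostPFA_pacc (w : List α) :
    M.toPostPFA.pacc w = if M.eval w ∈ M.accept then 1 else 0 := by
  simp [PostPFA.pacc, toPostPFA, M.pRun_funMatrix_endmarkedStep, Finset.sum_pi_single']

lemma toPostPFA_prej (w : List α) :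
    M.toPostPFA.prej w = if M.eval w ∈ M.accept then 0 else 1 := by
  simp [PostPFA.prej, toPostPFA, M.pRun_funMatrix_endmarkedStep, Finset.sum_pi_single']

lemma toPostPFA_recognizesZero : M.toPostPFA.RecognizesZero M.accepts := by
  intro w
  by_cases h : M.eval w ∈ M.accept <;>
    simp [PostPFA.fa, toPostPFA_pacc, toPostPFA_prej, h] <;> exact h

end DFA

theorem Language.IsRegular.zPostS {α : Type} {L : Language α} (h : L.IsRegular) : ZPostS L := by
  obtain ⟨σ, _, M, rfl⟩ := h
  have : Nonempty σ := ⟨M.start⟩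
  obtain ⟨n, hn⟩ : ∃ n, Fintype.card σ = n + 1 := Nat.exists_eq_add_one.mpr Fintype.card_pos
  let e : σ ≃ Fin (n + 1) := Fintype.equivFinOfCardEq hn
  exact ⟨(DFA.reindex e M).toPostPFA,
    M.accepts_reindex e ▸ (DFA.reindex e M).toPostPFA_recognizesZero⟩

theorem ZPostS.postS {α : Type} {L : Set (List α)} (h : ZPostS L) : PostS L := by
  obtain ⟨M, hM⟩ := h
  refine ⟨M, 0, le_rfl, by norm_num, fun w => ⟨fun hw => ?_, fun hw => ?_⟩⟩
  · simp [(hM w).1 hw]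
  · simp [(hM w).2 hw]

namespace EqCount

/-- States `0`, `1`, `2` carry `4^(-|w|)`, `16^(-#a(w))`, `16^(-#b(w))` (up to the factors
`3/5`, `1/5`, `1/5` set by `¢`), `3` collects the lost mass, `4` accepts and `5` rejects.
Column `j` is the distribution of the successor of state `j`. -/
def A : ESym TwoSym → Matrix (Fin 6) (Fin 6) ℝ
  | .cent => !![3/5, 0, 0, 0, 0, 0;
                1/5, 1, 0, 0, 0, 0;
                1/5, 0, 1, 0, 0, 0;
                0,   0, 0, 1, 0, 0;
                0,   0, 0, 0, 1, 0;
                0,   0, 0, 0, 0, 1]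
  | .letter .a => !![1/4, 0,     0, 0, 0, 0;
                     0,   1/16,  0, 0, 0, 0;
                     0,   0,     1, 0, 0, 0;
                     3/4, 15/16, 0, 1, 0, 0;
                     0,   0,     0, 0, 1, 0;
                     0,   0,     0, 0, 0, 1]
  | .letter .b => !![1/4, 0, 0,     0, 0, 0;
                     0,   1, 0,     0, 0, 0;
                     0,   0, 1/16,  0, 0, 0;
                     3/4, 0, 15/16, 1, 0, 0;
                     0,   0, 0,     0, 1, 0;
                     0,   0, 0,     0, 0, 1]
  | .dollar => !![0, 0, 0, 0, 0, 0;
                  0, 0, 0, 0, 0, 0;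
                  0, 0, 0, 0, 0, 0;
                  0, 0, 0, 1, 0, 0;
                  1, 0, 0, 0, 1, 0;
                  0, 1, 1, 0, 0, 1]

lemma A_nonneg (σ : ESym TwoSym) (i j : Fin 6) : 0 ≤ A σ i j := by
  rcases σ with _ | _ | _ | _ <;> fin_cases i <;> fin_cases j <;> norm_num [A]

lemma sum_A_col (σ : ESym TwoSym) (j : Fin 6) : ∑ i, A σ i j = 1 := by
  rcases σ with _ | _ | _ | _ <;> fin_cases j <;> norm_num [A, Fin.sum_univ_succ]

lemma A_cent_mulVec : (A .cent).mulVec (Pi.single 0 1) = ![3/5, 1/5, 1/5, 0, 0, 0] := by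
  ext i; fin_cases i <;> simp [A, Matrix.mulVec, dotProduct, Fin.sum_univ_succ]

lemma A_a_mulVec (g x y s : ℝ) :
    (A (.letter .a)).mulVec ![g, x, y, s, 0, 0] =
      ![g / 4, x / 16, y, s + 3/4 * g + 15/16 * x, 0, 0] := by
  ext i; fin_cases i <;> simp [A, Matrix.mulVec, dotProduct, Fin.sum_univ_succ] <;> ring

lemma A_b_mulVec (g x y s : ℝ) :
    (A (.letter .b)).mulVec ![g, x, y, s, 0, 0] =
      ![g / 4, x, y / 16, s + 3/4 * g + 15/16 * y, 0, 0] := by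
  ext i; fin_cases i <;> simp [A, Matrix.mulVec, dotProduct, Fin.sum_univ_succ] <;> ring

lemma A_dollar_mulVec (g x y s : ℝ) :
    (A .dollar).mulVec ![g, x, y, s, 0, 0] = ![0, 0, 0, s, g, x + y] := by
  ext i; fin_cases i <;> simp [A, Matrix.mulVec, dotProduct, Fin.sum_univ_succ]

lemma foldl_A_letters (u : List TwoSym) (g x y s : ℝ) : ∃ s' : ℝ,
    (u.map ESym.letter).foldl (fun v σ => (A σ).mulVec v) ![g, x, y, s, 0, 0] =
      ![g * (1/4) ^ u.count .a * (1/4) ^ u.count .b, x * ((1/4) ^ u.count .a) ^ 2,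
        y * ((1/4) ^ u.count .b) ^ 2, s', 0, 0] := by
  induction u generalizing g x y s with
  | nil => exact ⟨s, by simp⟩
  | cons c u ih =>
    rcases c
    · obtain ⟨s', hs'⟩ := ih (g / 4) (x / 16) y (s + 3/4 * g + 15/16 * x)
      refine ⟨s', ?_⟩
      rw [List.map_cons, List.foldl_cons, A_a_mulVec, hs']
      simp only [List.count_cons_self, List.count_cons_of_ne (by decide : TwoSym.a ≠ TwoSym.b),
        Matrix.vecCons_inj]
      exact ⟨by ring, by ring, trivial⟩
    · obtain ⟨s', hs'⟩ := ih (g / 4) x (y / 16) (s + 3/4 * g + 15/16 * y)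
      refine ⟨s', ?_⟩
      rw [List.map_cons, List.foldl_cons, A_b_mulVec, hs']
      simp only [List.count_cons_self, List.count_cons_of_ne (by decide : TwoSym.b ≠ TwoSym.a),
        Matrix.vecCons_inj]
      exact ⟨by ring, trivial, by ring, trivial⟩

lemma pRun_A (w : List TwoSym) : ∃ s : ℝ,
    pRun A w = ![0, 0, 0, s, 3/5 * (1/4) ^ w.count .a * (1/4) ^ w.count .b,
      1/5 * ((1/4) ^ w.count .a) ^ 2 + 1/5 * ((1/4) ^ w.count .b) ^ 2] := by
  obtain ⟨s, hs⟩ := foldl_A_letters w (3/5) (1/5) (1/5) 0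
  refine ⟨s, ?_⟩
  rw [pRun, List.foldl_cons, List.foldl_append, A_cent_mulVec, hs, List.foldl_cons, List.foldl_nil,
    A_dollar_mulVec]

def postPFA : PostPFA TwoSym where
  n := 5
  A := A
  nonneg := A_nonneg
  colSum := sum_A_col
  Qpa := {4}
  Qpr := {5}
  disj := by decide
  postPos w := by
    obtain ⟨s, hs⟩ := pRun_A w
    simp [hs]
    positivity

lemma postPFA_pacc (w : List TwoSym) :
    postPFA.pacc w = 3/5 * (1/4) ^ w.count .a * (1/4) ^ w.count .b := by
  obtain ⟨s, hs⟩ := pRun_A w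
  simp [PostPFA.pacc, postPFA, hs]

lemma postPFA_prej (w : List TwoSym) :
    postPFA.prej w = 1/5 * ((1/4) ^ w.count .a) ^ 2 + 1/5 * ((1/4) ^ w.count .b) ^ 2 := by
  obtain ⟨s, hs⟩ := pRun_A w
  simp [PostPFA.prej, postPFA, hs]

lemma postPFA_fa (w : List TwoSym) :
    postPFA.fa w = 3 * (1/4) ^ w.count .a * (1/4) ^ w.count .b /
      (3 * (1/4) ^ w.count .a * (1/4) ^ w.count .b + ((1/4) ^ w.count .a) ^ 2 +
        ((1/4) ^ w.count .b) ^ 2) := by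
  rw [PostPFA.fa, postPFA_pacc, postPFA_prej]
  field_simp
  ring

end EqCount

lemma four_mul_pow_le_pow_of_lt {k m : ℕ} (h : k < m) : 4 * (1/4 : ℝ) ^ m ≤ (1/4) ^ k :=
  calc 4 * (1/4 : ℝ) ^ m ≤ 4 * (1/4) ^ (k + 1) :=
        mul_le_mul_of_nonneg_left (pow_le_pow_of_le_one (by norm_num) (by norm_num) h) (by norm_num)
    _ = (1/4) ^ k := by ring

lemma three_mul_mul_div_le_of_four_mul_le {p q : ℝ} (hp : 0 < p) (hq : 0 < q)
    (h : 4 * p ≤ q ∨ 4 * q ≤ p) :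
    3 * p * q / (3 * p * q + p ^ 2 + q ^ 2) ≤ 12/29 := by
  rw [div_le_iff₀ (by positivity)]
  rcases h with h | h
  · nlinarith [mul_nonneg (sub_nonneg.mpr h) (by linarith : (0 : ℝ) ≤ 4 * q - p)]
  · nlinarith [mul_nonneg (sub_nonneg.mpr h) (by linarith : (0 : ℝ) ≤ 4 * p - q)]

theorem Leq_postS : PostS Leq := by
  refine ⟨EqCount.postPFA, 12/29, by norm_num, by norm_num,
    fun w => ⟨fun hw => ?_, fun hw => ?_⟩⟩
  · have hw : w.count .a = w.count .b := hw
    rw [EqCount.postPFA_fa, hw, le_div_iff₀ (by positivity)]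
    nlinarith [pow_pos (by norm_num : (0:ℝ) < 1/4) (w.count .b)]
  · rw [EqCount.postPFA_fa]
    apply three_mul_mul_div_le_of_four_mul_le (by positivity) (by positivity)
    rcases lt_or_gt_of_ne (hw : w.count .a ≠ w.count .b) with h | h
    · exact .inr (four_mul_pow_le_pow_of_lt h)
    · exact .inl (four_mul_pow_le_pow_of_lt h)

lemma replicate_b_mem_leftQuotient_Leq_iff (m k : ℕ) :
    List.replicate k TwoSym.b ∈ Language.leftQuotient Leq (List.replicate m TwoSym.a) ↔
      m = k := by
  change List.replicate m TwoSym.a ++ List.replicate k TwoSym.b ∈ Leq ↔ m = k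
  simp [Leq, List.count_replicate]

theorem Leq_not_isRegular : ¬ Language.IsRegular Leq := by
  intro h
  have hinj : Function.Injective fun m => Language.leftQuotient Leq (List.replicate m TwoSym.a) :=
    fun m k hmk => (replicate_b_mem_leftQuotient_Leq_iff m k).mp
      (congrArg (_ ∈ ·) hmk ▸ (replicate_b_mem_leftQuotient_Leq_iff k k).mpr rfl)
  refine Set.infinite_range_of_injective hinj (h.finite_range_leftQuotient.subset ?_)
  rintro _ ⟨m, rfl⟩
  exact ⟨_, rfl⟩

/-- Regular languages are strictly contained in `PostS`: every regular language is
in `PostS`, and the nonregular language `L_eq` is in `PostS`. -/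
theorem REG_ssubset_PostS :
    (∀ (α : Type) [Fintype α] (L : Set (List α)), Language.IsRegular L → PostS L) ∧
      PostS Leq ∧ ¬ Language.IsRegular Leq :=
  ⟨fun _ _ _ h => h.zPostS.postS, Leq_postS, Leq_not_isRegular⟩
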